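/- arXiv:2004.08971 — 2 statements merged into one kernel-verified Lean document; each statement's English description precedes it below -/
import Mathlib

section
/- Let γ : [0,1] → ℂ be a continuously differentiable path (the contour C) with endpoints A = γ(0), B = γ(1). Let K : ℂ → ℂ be continuous, and let F : ℂ × ℂ → ℂ be continuous and holomorphic in its second variable with derivative R(α,γ) := ∂F/∂γ(α,γ) continuous. Assume R satisfies the dual resolvent identity R(α,γ) + (1/(2π))·∫_C R(α,β)·K(β−γ) dβ = −(1/(2π))·K(α−γ) for all α, γ ∈ ℂ. Let D₋ : ℂ → ℂ be a continuous function satisfying D₋(α) + (1/(2π))·∫_C K(α−β)·D₋(β) dβ = 1/(2π) for all α ∈ ℂ. Then D₋(α) = (1/(2π))·(1 + F(α,B) − F(α,A)) for all α ∈ ℂ. -/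
/-!
Pair the equation for `D₋` with `R(α, ·)` and the dual resolvent identity with `D₋`: both compute
the double integral `∫_C ∫_C R(α,β) K(β-β') D₋(β') dβ' dβ`, in the two orders of integration.
Comparing the results gives `∫_C R(α,β) dβ = -∫_C K(α-β) D₋(β) dβ`, and the left side is
`F(α,B) - F(α,A)` by the fundamental theorem of calculus, since `R = ∂F/∂γ`.
-/

/-- Contour integral of `f` along the path `γ : [0,1] → ℂ`:
`∫_C f(β) dβ := ∫₀¹ f(γ(t)) γ'(t) dt`. -/
noncomputable def cInt (γ : ℝ → ℂ) (f : ℂ → ℂ) : ℂ :=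
  ∫ t in (0:ℝ)..1, f (γ t) * deriv γ t

open MeasureTheory

section ContourIntegral

variable {γ : ℝ → ℂ}

lemma cInt_const_mul (c : ℂ) (f : ℂ → ℂ) :
    cInt γ (fun β => c * f β) = c * cInt γ f := by
  simp only [cInt, mul_assoc, intervalIntegral.integral_const_mul]

lemma cInt_mul_const (f : ℂ → ℂ) (c : ℂ) :
    cInt γ (fun β => f β * c) = cInt γ f * c := by
  simp only [cInt, mul_right_comm _ c, intervalIntegral.integral_mul_const]

lemma cInt_neg (f : ℂ → ℂ) : cInt γ (fun β => -f β) = -cInt γ f := by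
  simp only [cInt, neg_mul, intervalIntegral.integral_neg]

lemma intervalIntegrable_comp_mul_deriv (hγ : ContDiff ℝ 1 γ) {f : ℂ → ℂ}
    (hf : Continuous f) : IntervalIntegrable (fun t => f (γ t) * deriv γ t) volume 0 1 :=
  ((hf.comp hγ.continuous).mul (hγ.continuous_deriv le_rfl)).intervalIntegrable _ _

lemma cInt_sub (hγ : ContDiff ℝ 1 γ) {f g : ℂ → ℂ} (hf : Continuous f)
    (hg : Continuous g) : cInt γ (fun β => f β - g β) = cInt γ f - cInt γ g := by
  simp only [cInt, sub_mul]
  exact intervalIntegral.integral_sub (intervalIntegrable_comp_mul_deriv hγ hf)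
    (intervalIntegrable_comp_mul_deriv hγ hg)

lemma cInt_deriv (hγ : ContDiff ℝ 1 γ) {f : ℂ → ℂ} (hf : Differentiable ℂ f)
    (hf' : Continuous (deriv f)) : cInt γ (deriv f) = f (γ 1) - f (γ 0) := by
  refine intervalIntegral.integral_eq_sub_of_hasDerivAt (f := fun t => f (γ t)) (fun t _ => ?_)
    (intervalIntegrable_comp_mul_deriv hγ hf')
  exact (hf (γ t)).hasDerivAt.comp t ((hγ.differentiable one_ne_zero t).hasDerivAt)

lemma cInt_cInt_swap (hγ : ContDiff ℝ 1 γ) {k : ℂ → ℂ → ℂ}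
    (hk : Continuous (Function.uncurry k)) :
    cInt γ (fun β => cInt γ (fun β' => k β β')) =
      cInt γ (fun β' => cInt γ (fun β => k β β')) := by
  let G : ℝ → ℝ → ℂ := fun t s => k (γ t) (γ s) * deriv γ s * deriv γ t
  have hG : Continuous (Function.uncurry G) := by
    have hγ' := hγ.continuous_deriv le_rfl
    exact ((hk.comp (hγ.continuous.prodMap hγ.continuous)).mul (hγ'.comp continuous_snd)).mul
      (hγ'.comp continuous_fst)
  have hGint : IntegrableOn (Function.uncurry G)
      (Set.uIoc 0 1 ×ˢ Set.uIoc 0 1) :=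
    (hG.continuousOn.integrableOn_compact (isCompact_uIcc.prod isCompact_uIcc)).mono_set
      (Set.prod_mono Set.uIoc_subset_uIcc Set.uIoc_subset_uIcc)
  calc cInt γ (fun β => cInt γ (fun β' => k β β'))
      = ∫ t in (0:ℝ)..1, ∫ s in (0:ℝ)..1, G t s := by
        simp only [cInt, ← intervalIntegral.integral_mul_const]
        rfl
    _ = ∫ s in (0:ℝ)..1, ∫ t in (0:ℝ)..1, G t s :=
        intervalIntegral_intervalIntegral_swap hGint
    _ = cInt γ (fun β' => cInt γ (fun β => k β β')) := by
        simp only [cInt, ← intervalIntegral.integral_mul_const]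
        congr 1; funext s; congr 1; funext t
        exact mul_right_comm _ _ _

lemma const_mul_cInt_eq_neg_cInt_of_dual (hγ : ContDiff ℝ 1 γ) {k : ℂ → ℂ → ℂ}
    (hk : Continuous (Function.uncurry k)) {r D : ℂ → ℂ} (hr : Continuous r) (hD : Continuous D)
    (α c : ℂ) (hrk : ∀ g, r g + cInt γ (fun β => r β * k β g) = -k α g)
    (hDk : ∀ a, D a + cInt γ (fun β => k a β * D β) = c) :
    c * cInt γ r = -cInt γ (fun β => k α β * D β) := by
  have hkα : Continuous (k α) := hk.uncurry_left α
  have hrD : Continuous fun β => r β * D β := hr.mul hD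
  have hW := cInt_cInt_swap hγ (k := fun β β' => r β * (k β β' * D β'))
    ((hr.comp continuous_fst).mul (hk.mul (hD.comp continuous_snd)))
  have h_inner : ∀ β, cInt γ (fun β' => r β * (k β β' * D β')) = c * r β - r β * D β := by
    intro β
    rw [cInt_const_mul]
    linear_combination r β * hDk β
  have h_outer : ∀ β',
      cInt γ (fun β => r β * (k β β' * D β')) = -(k α β' * D β') - r β' * D β' := by
    intro β'
    simp only [← mul_assoc]
    rw [cInt_mul_const]
    linear_combination D β' * hrk β'
  simp only [h_inner, h_outer] at hW
  rw [cInt_sub hγ (f := fun β => c * r β) (continuous_const.mul hr) hrD,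
    cInt_sub hγ (f := fun β => -(k α β * D β)) (hkα.mul hD).neg hrD, cInt_neg,
    cInt_const_mul] at hW
  linear_combination hW

end ContourIntegral

theorem stmt_5_general (γ : ℝ → ℂ) (hγ : ContDiff ℝ 1 γ)
    (A B : ℂ) (hA : A = γ 0) (hB : B = γ 1)
    (K : ℂ → ℂ) (hK : Continuous K)
    (F : ℂ → ℂ → ℂ)
    (hF2 : ∀ a : ℂ, Differentiable ℂ (fun g => F a g))
    (R : ℂ → ℂ → ℂ) (hRdef : ∀ a g : ℂ, R a g = deriv (fun g' => F a g') g)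
    (hRc : Continuous fun p : ℂ × ℂ => R p.1 p.2)
    (hres : ∀ a g : ℂ,
      R a g + (1 / (2 * (Real.pi : ℂ))) * cInt γ (fun β => R a β * K (β - g))
        = -(1 / (2 * (Real.pi : ℂ))) * K (a - g))
    (Dm : ℂ → ℂ) (hDmc : Continuous Dm)
    (hDm : ∀ a : ℂ,
      Dm a + (1 / (2 * (Real.pi : ℂ))) * cInt γ (fun β => K (a - β) * Dm β)
        = 1 / (2 * (Real.pi : ℂ))) :
    ∀ a : ℂ, Dm a = (1 / (2 * (Real.pi : ℂ))) * (1 + F a B - F a A) := by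
  intro a
  set c : ℂ := 1 / (2 * (Real.pi : ℂ))
  have hRa : R a = deriv (F a) := funext (hRdef a)
  have hRac : Continuous (R a) := hRc.uncurry_left a
  have hFTC : cInt γ (R a) = F a B - F a A := by
    rw [hA, hB, hRa]
    exact cInt_deriv hγ (hF2 a) (hRa ▸ hRac)
  have hpair := const_mul_cInt_eq_neg_cInt_of_dual hγ (k := fun α β => c * K (α - β))
    (continuous_const.mul (hK.comp continuous_sub)) hRac hDmc a c
    (fun g => by simpa only [mul_left_comm _ c, cInt_const_mul, neg_mul] using hres a g)
    (fun α => by simpa only [mul_assoc, cInt_const_mul] using hDm α)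
  simp only [mul_assoc, cInt_const_mul, hFTC] at hpair
  linear_combination hDm a - hpair

/-- the dressed charge `D₋` solving `(I + (1/2π)K)∗D₋ = 1/(2π)` is given by
`D₋(α) = (1/2π)(1 + F(α,B) − F(α,A))`, where `R = ∂F/∂γ` satisfies the dual resolvent
identity. -/
theorem stmt_5 (γ : ℝ → ℂ) (hγ : ContDiff ℝ 1 γ)
    (A B : ℂ) (hA : A = γ 0) (hB : B = γ 1)
    (K : ℂ → ℂ) (hK : Continuous K)
    (F : ℂ → ℂ → ℂ) (hFc : Continuous fun p : ℂ × ℂ => F p.1 p.2)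
    (hF2 : ∀ a : ℂ, Differentiable ℂ (fun g => F a g))
    (R : ℂ → ℂ → ℂ) (hRdef : ∀ a g : ℂ, R a g = deriv (fun g' => F a g') g)
    (hRc : Continuous fun p : ℂ × ℂ => R p.1 p.2)
    (hres : ∀ a g : ℂ,
      R a g + (1 / (2 * (Real.pi : ℂ))) * cInt γ (fun β => R a β * K (β - g))
        = -(1 / (2 * (Real.pi : ℂ))) * K (a - g))
    (Dm : ℂ → ℂ) (hDmc : Continuous Dm)
    (hDm : ∀ a : ℂ,
      Dm a + (1 / (2 * (Real.pi : ℂ))) * cInt γ (fun β => K (a - β) * Dm β)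
        = 1 / (2 * (Real.pi : ℂ))) :
    ∀ a : ℂ, Dm a = (1 / (2 * (Real.pi : ℂ))) * (1 + F a B - F a A) :=
  stmt_5_general γ hγ A B hA hB K hK F hF2 R hRdef hRc hres Dm hDmc hDm
end

section
/- Let p : ℂ → ℂ be holomorphic with p(−z) = −p(z) and p(conj(z)) = conj(p(z)) for all z ∈ ℂ, and let K : ℂ → ℂ be continuous with K(−z) = K(z) and K(conj(z)) = conj(K(z)) for all z ∈ ℂ. Let γ : [0,1] → ℂ be a continuously differentiable path satisfying γ(1−t) = −conj(γ(t)) for all t ∈ [0,1] (the contour C). Suppose ρ : ℂ → ℂ is continuous and satisfies 2π·ρ(α) = p'(α) − ∫_C K(α−β)·ρ(β) dβ for all α ∈ ℂ. Then the function ρ̃(α) := conj( ρ(−conj(α)) ) satisfies the same integral equation: 2π·ρ̃(α) = p'(α) − ∫_C K(α−β)·ρ̃(β) dβ for all α ∈ ℂ. -/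
open ComplexConjugate MeasureTheory

lemma Function.Odd.even_deriv {𝕜 F : Type*} [NontriviallyNormedField 𝕜] [NormedAddCommGroup F]
    [NormedSpace 𝕜 F] {f : 𝕜 → F} (hf : Function.Odd f) : Function.Even (deriv f) := fun x => by
  have h := deriv_comp_neg f x
  rw [show (fun x => f (-x)) = -f from funext hf, deriv.neg] at h
  exact (neg_injective h).symm

lemma deriv_conj_of_conj_comm {f : ℂ → ℂ} (hf : ∀ z, f (conj z) = conj (f z)) (z : ℂ) :
    deriv f (conj z) = conj (deriv f z) := by
  have hff : conj ∘ f ∘ conj = f := funext fun w => by simp [hf]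
  simpa [hff] using congrFun (deriv_conj_conj (f := f)) (conj z)

lemma deriv_one_sub_of_reflection {γ : ℝ → ℂ}
    (hsym : ∀ t ∈ Set.Icc (0:ℝ) 1, γ (1 - t) = -conj (γ t)) {t : ℝ} (ht : t ∈ Set.Ioo (0:ℝ) 1) :
    deriv γ (1 - t) = conj (deriv γ t) := by
  have hloc : (fun s => γ (1 - s)) =ᶠ[nhds t] fun s => -star (γ s) := by
    filter_upwards [Ioo_mem_nhds ht.1 ht.2] with s hs
    exact hsym s (Set.Ioo_subset_Icc_self hs)
  have h := hloc.deriv_eq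
  rw [deriv_comp_const_sub, deriv.fun_neg, deriv.star] at h
  exact neg_injective h

lemma conj_cInt_of_reflection {γ : ℝ → ℂ}
    (hsym : ∀ t ∈ Set.Icc (0:ℝ) 1, γ (1 - t) = -conj (γ t)) (f : ℂ → ℂ) :
    conj (cInt γ f) = cInt γ fun β => conj (f (-conj β)) := by
  let g : ℝ → ℂ := fun s => conj (f (-conj (γ s))) * deriv γ s
  have hpoint : ∀ t ∈ Set.Ioo (0:ℝ) 1, conj (f (γ t) * deriv γ t) = g (1 - t) := by
    intro t ht
    have hγt : γ t = -conj (γ (1 - t)) := by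
      simpa using hsym (1 - t) ⟨by linarith [ht.2], by linarith [ht.1]⟩
    simp only [g, map_mul, deriv_one_sub_of_reflection hsym ht, hγt]
  calc conj (cInt γ f) = ∫ t in (0:ℝ)..1, conj (f (γ t) * deriv γ t) :=
        intervalIntegral.intervalIntegral_conj.symm
    _ = ∫ t in (0:ℝ)..1, g (1 - t) := by
        simp only [intervalIntegral.integral_of_le zero_le_one, integral_Ioc_eq_integral_Ioo]
        exact setIntegral_congr_fun measurableSet_Ioo hpoint
    _ = cInt γ fun β => conj (f (-conj β)) := by
        simp [intervalIntegral.integral_comp_sub_left g, cInt, g]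

theorem stmt_19_general (p : ℂ → ℂ)
    (hpodd : ∀ z : ℂ, p (-z) = -p z)
    (hpconj : ∀ z : ℂ, p ((starRingEnd ℂ) z) = (starRingEnd ℂ) (p z))
    (K : ℂ → ℂ)
    (hKeven : ∀ z : ℂ, K (-z) = K z)
    (hKconj : ∀ z : ℂ, K ((starRingEnd ℂ) z) = (starRingEnd ℂ) (K z))
    (γ : ℝ → ℂ)
    (hsym : ∀ t ∈ Set.Icc (0:ℝ) 1, γ (1 - t) = -(starRingEnd ℂ) (γ t))
    (ρ : ℂ → ℂ)
    (hρeq : ∀ α : ℂ,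
      2 * (Real.pi : ℂ) * ρ α = deriv p α - cInt γ (fun β => K (α - β) * ρ β))
    (ρt : ℂ → ℂ)
    (hρt : ∀ α : ℂ, ρt α = (starRingEnd ℂ) (ρ (-(starRingEnd ℂ) α))) :
    ∀ α : ℂ,
      2 * (Real.pi : ℂ) * ρt α = deriv p α - cInt γ (fun β => K (α - β) * ρt β) := by
  intro α
  have hsource : conj (deriv p (-conj α)) = deriv p α := by
    rw [← map_neg, deriv_conj_of_conj_comm hpconj, Complex.conj_conj, Function.Odd.even_deriv hpodd]
  have hkernel : (fun β => conj (K (-conj α - -conj β) * ρ (-conj β))) =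
      fun β => K (α - β) * ρt β := by
    funext β
    rw [map_mul, ← hKconj, ← hρt, ← hKeven]
    simp [neg_add_eq_sub]
  have h := congrArg conj (hρeq (-conj α))
  rw [map_sub, conj_cInt_of_reflection hsym, hkernel, hsource, map_mul, ← hρt] at h
  simpa only [map_mul, map_ofNat, Complex.conj_ofReal] using h

/-- the symmetry `ρ(α)* = ρ(−α*)` of the density of Bethe roots: if `p` is
holomorphic, odd, with real symmetry, `K` is continuous, even, with real symmetry, the
contour satisfies `γ(1−t) = −conj(γ(t))`, and `ρ` is continuous and solves
`2πρ(α) = p'(α) − ∫_C K(α−β)ρ(β)dβ`, then `ρ̃(α) = conj(ρ(−conj α))` solves the same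
equation. -/
theorem stmt_19 (p : ℂ → ℂ) (hpd : Differentiable ℂ p)
    (hpodd : ∀ z : ℂ, p (-z) = -p z)
    (hpconj : ∀ z : ℂ, p ((starRingEnd ℂ) z) = (starRingEnd ℂ) (p z))
    (K : ℂ → ℂ) (hKc : Continuous K)
    (hKeven : ∀ z : ℂ, K (-z) = K z)
    (hKconj : ∀ z : ℂ, K ((starRingEnd ℂ) z) = (starRingEnd ℂ) (K z))
    (γ : ℝ → ℂ) (hγ : ContDiff ℝ 1 γ)
    (hsym : ∀ t ∈ Set.Icc (0:ℝ) 1, γ (1 - t) = -(starRingEnd ℂ) (γ t))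
    (ρ : ℂ → ℂ) (hρc : Continuous ρ)
    (hρeq : ∀ α : ℂ,
      2 * (Real.pi : ℂ) * ρ α = deriv p α - cInt γ (fun β => K (α - β) * ρ β))
    (ρt : ℂ → ℂ)
    (hρt : ∀ α : ℂ, ρt α = (starRingEnd ℂ) (ρ (-(starRingEnd ℂ) α))) :
    ∀ α : ℂ,
      2 * (Real.pi : ℂ) * ρt α = deriv p α - cInt γ (fun β => K (α - β) * ρt β) :=
  stmt_19_general p hpodd hpconj K hKeven hKconj γ hsym ρ hρeq ρt hρt
end
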